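/- If a ∉ B₀ and b ∈ {±1}^{2p+1} satisfies T(b) ≥ T(a) (including the case b ∉ B₀ with T(b) > T(a)), then Γ·(ab') = -Γ·(ab), where b' is the prime of b. -/

import Mathlib

open scoped Classical
open Finset

noncomputable section

/-- Bit strings in {±1}^{2p+1}, indexed by integers -p ≤ j ≤ p (Bool-encoded). -/
def QStr (p : ℕ) : Type := {j : ℤ // j ∈ Finset.Icc (-(p : ℤ)) (p : ℤ)} → Bool

instance (p : ℕ) : Fintype (QStr p) := by unfold QStr; infer_instance
instance (p : ℕ) : DecidableEq (QStr p) := by unfold QStr; infer_instance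

/-- The ±1 entry of the string `a` at index `j` (1 outside the index range). -/
def ent (p : ℕ) (a : QStr p) (j : ℤ) : ℝ :=
  if h : j ∈ Finset.Icc (-(p : ℤ)) (p : ℤ) then (if a ⟨j, h⟩ then 1 else -1) else 1

/-- Transfer matrix element ⟨x|e^{iβX}|y⟩ = cos β if x = y, i sin β otherwise. -/
def bket (x y : ℝ) (β : ℝ) : ℂ :=
  if x = y then (Real.cos β : ℂ) else Complex.I * (Real.sin β : ℂ)

/-- f(a) = (1/2)⟨a₁|e^{iβ₁X}|a₂⟩⋯⟨a_p|e^{iβ_pX}|a₀⟩⟨a₀|e^{-iβ_pX}|a_{-p}⟩⋯⟨a_{-2}|e^{-iβ₁X}|a_{-1}⟩. -/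
def fQ (p : ℕ) (β : ℕ → ℝ) (a : QStr p) : ℂ :=
  (1 / 2 : ℂ) * ∏ r ∈ Finset.Icc 1 p,
    (bket (ent p a (r : ℤ)) (ent p a (if r = p then 0 else (r : ℤ) + 1)) (β r) *
      bket (ent p a (if r = p then 0 else -((r : ℤ) + 1))) (ent p a (-(r : ℤ))) (-(β r)))

/-- Γ_r = γ_r, Γ₀ = 0, Γ_{-r} = -γ_r. -/
def Gam (γ : ℕ → ℝ) (j : ℤ) : ℝ :=
  if 0 < j then γ j.toNat else if j < 0 then -(γ (-j).toNat) else 0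

/-- Γ·(ab) = Σ_{j=-p}^{p} Γ_j a_j b_j. -/
def Gdot (p : ℕ) (γ : ℕ → ℝ) (a b : QStr p) : ℝ :=
  ∑ j ∈ Finset.Icc (-(p : ℤ)) (p : ℤ), Gam γ j * ent p a j * ent p b j

/-- a ∈ B₀ iff a_{-r} = a_r for all 1 ≤ r ≤ p. -/
def symB (p : ℕ) (a : QStr p) : Prop :=
  ∀ r ∈ Finset.Icc (1 : ℤ) (p : ℤ), ent p a (-r) = ent p a r

/-- T(a): the largest 1 ≤ r ≤ p with a_r ≠ a_{-r}, and 0 for a ∈ B₀. -/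
def Tof (p : ℕ) (a : QStr p) : ℤ :=
  WithBot.unbotD 0 (((Finset.Icc (1 : ℤ) (p : ℤ)).filter (fun r => ent p a r ≠ ent p a (-r))).max)

/-- The string a' : negate entries with 1 ≤ |j| ≤ T(a), keep the rest. -/
def primeQ (p : ℕ) (a : QStr p) : QStr p :=
  fun j => if 1 ≤ |j.1| ∧ |j.1| ≤ Tof p a then !(a j) else a j

/-- Entrywise negation -a. -/
def negQ (p : ℕ) (a : QStr p) : QStr p := fun j => !(a j)

/-- Index reversal ā, with ā_j = a_{-j}. -/
def revQ (p : ℕ) (a : QStr p) : QStr p :=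
  fun j => a ⟨-j.1, by have h := j.2; simp only [Finset.mem_Icc] at h ⊢; omega⟩

/-- The finite-D iteration (cosine form):
H_D^{(0)}(a) = 1, H_D^{(m)}(a) = (Σ_b f(b) H_D^{(m-1)}(b) cos[(1/√D) Γ·(ab)])^D. -/
def HD (p : ℕ) (β γ : ℕ → ℝ) (D : ℕ) : ℕ → QStr p → ℂ
  | 0, _ => 1
  | m + 1, a =>
      (∑ b : QStr p, fQ p β b * HD p β γ D m b *
        (Real.cos ((1 / Real.sqrt D) * Gdot p γ a b) : ℂ)) ^ D

/-- The finite-D iteration (exponential form):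
H_D^{(0)}(a) = 1, H_D^{(m)}(a) = (Σ_b f(b) H_D^{(m-1)}(b) exp[-(i/√D) Γ·(ab)])^D. -/
def HDexp (p : ℕ) (β γ : ℕ → ℝ) (D : ℕ) : ℕ → QStr p → ℂ
  | 0, _ => 1
  | m + 1, a =>
      (∑ b : QStr p, fQ p β b * HDexp p β γ D m b *
        Complex.exp (-(Complex.I / (Real.sqrt D : ℂ)) * (Gdot p γ a b : ℂ))) ^ D

/-- The D → ∞ iteration: H^{(0)}(a) = 1,
H^{(m)}(a) = exp(-(1/2) Σ_b f(b) H^{(m-1)}(b) (Γ·(ab))²). -/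
def Hinf (p : ℕ) (β γ : ℕ → ℝ) : ℕ → QStr p → ℂ
  | 0, _ => 1
  | m + 1, a =>
      Complex.exp (-(1 / 2 : ℂ) *
        ∑ b : QStr p, fQ p β b * Hinf p β γ m b * ((Gdot p γ a b) ^ 2 : ℝ))

/-- G^{(m)}_{j,k} = Σ_a f(a) H^{(m)}(a) a_j a_k, with H^{(m)} the D → ∞ iterates. -/
def GmatH (p : ℕ) (β γ : ℕ → ℝ) (m : ℕ) (j k : ℤ) : ℂ :=
  ∑ a : QStr p, fQ p β a * Hinf p β γ m a * (ent p a j : ℂ) * (ent p a k : ℂ)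

/-- The recursively-defined G matrices: G^{(0)}_{j,k} = Σ_a f(a) a_j a_k and
G^{(m)}_{j,k} = Σ_a f(a) a_j a_k exp(-(1/2) Σ_{j',k'} G^{(m-1)}_{j',k'} Γ_{j'} Γ_{k'} a_{j'} a_{k'}). -/
def GmatR (p : ℕ) (β γ : ℕ → ℝ) : ℕ → ℤ → ℤ → ℂ
  | 0, j, k => ∑ a : QStr p, fQ p β a * (ent p a j : ℂ) * (ent p a k : ℂ)
  | m + 1, j, k =>
      ∑ a : QStr p, fQ p β a * (ent p a j : ℂ) * (ent p a k : ℂ) *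
        Complex.exp (-(1 / 2 : ℂ) *
          ∑ j' ∈ Finset.Icc (-(p : ℤ)) (p : ℤ), ∑ k' ∈ Finset.Icc (-(p : ℤ)) (p : ℤ),
            GmatR p β γ m j' k' * (Gam γ j' : ℂ) * (Gam γ k' : ℂ) *
              (ent p a j' : ℂ) * (ent p a k' : ℂ))

/-- H^{(m+1)}(a) expressed through G^{(m)}:
H^{(m+1)}(a) = exp(-(1/2) Σ_{j',k'} G^{(m)}_{j',k'} Γ_{j'} Γ_{k'} a_{j'} a_{k'}). -/
def HG (p : ℕ) (β γ : ℕ → ℝ) (m : ℕ) (a : QStr p) : ℂ :=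
  Complex.exp (-(1 / 2 : ℂ) *
    ∑ j' ∈ Finset.Icc (-(p : ℤ)) (p : ℤ), ∑ k' ∈ Finset.Icc (-(p : ℤ)) (p : ℤ),
      GmatR p β γ m j' k' * (Gam γ j' : ℂ) * (Gam γ k' : ℂ) *
        (ent p a j' : ℂ) * (ent p a k' : ℂ))

end

lemma ent_symm_of_Tof_lt (p : ℕ) (c : QStr p) (r : ℤ) (hr : r ∈ Finset.Icc (1:ℤ) (p:ℤ))
    (h : Tof p c < r) : ent p c r = ent p c (-r) := by
  by_contra h'
  have hmem : r ∈ (Finset.Icc (1:ℤ) (p:ℤ)).filter (fun r => ent p c r ≠ ent p c (-r)) :=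
    Finset.mem_filter.2 ⟨hr, h'⟩
  have hle := Finset.le_max hmem
  obtain ⟨m, hm⟩ := Finset.max_of_mem hmem
  rw [hm] at hle
  have h1 : Tof p c = m := by simp [Tof, hm]
  have h2 : r ≤ m := WithBot.coe_le_coe.1 hle
  omega

lemma le_Tof_of_ne (p : ℕ) (c : QStr p) (r : ℤ) (hr : r ∈ Finset.Icc (1:ℤ) (p:ℤ))
    (hne : ent p c r ≠ ent p c (-r)) : r ≤ Tof p c := by
  by_contra h
  exact hne (ent_symm_of_Tof_lt p c r hr (by omega))

lemma one_le_Tof (p : ℕ) (a : QStr p) (ha : ¬ symB p a) : 1 ≤ Tof p a := by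
  rw [symB] at ha
  push_neg at ha
  obtain ⟨r, hr, hne⟩ := ha
  have h1 := le_Tof_of_ne p a r hr (Ne.symm hne)
  have h2 := (Finset.mem_Icc.1 hr).1
  omega

lemma Gam_neg (γ : ℕ → ℝ) (j : ℤ) : Gam γ (-j) = -Gam γ j := by
  unfold Gam
  rcases lt_trichotomy j 0 with h | h | h
  · rw [if_pos (by omega : (0:ℤ) < -j), if_neg (by omega : ¬ (0:ℤ) < j), if_pos h, neg_neg]
  · subst h; simp
  · rw [if_neg (by omega : ¬ (0:ℤ) < -j), if_pos (by omega : -j < (0:ℤ)),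
      if_pos h, neg_neg]

lemma ent_prime (p : ℕ) (b : QStr p) (j : ℤ) (hj : j ∈ Finset.Icc (-(p:ℤ)) (p:ℤ)) :
    ent p (primeQ p b) j = if 1 ≤ |j| ∧ |j| ≤ Tof p b then -(ent p b j) else ent p b j := by
  have hpq : primeQ p b ⟨j, hj⟩ = if 1 ≤ |j| ∧ |j| ≤ Tof p b then !(b ⟨j, hj⟩) else b ⟨j, hj⟩ :=
    rfl
  simp only [ent, dif_pos hj, hpq]
  split_ifs <;> simp_all

lemma ent_neg_eq (p : ℕ) (c : QStr p) (j : ℤ) (hj : |j| ≤ (p:ℤ)) (h1 : 1 ≤ |j|)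
    (h : Tof p c < |j|) : ent p c (-j) = ent p c j := by
  rcases le_or_gt 0 j with hs | hs
  · rw [abs_of_nonneg hs] at hj h1 h
    exact (ent_symm_of_Tof_lt p c j (Finset.mem_Icc.2 ⟨h1, hj⟩) h).symm
  · rw [abs_of_neg hs] at hj h1 h
    have := ent_symm_of_Tof_lt p c (-j) (Finset.mem_Icc.2 ⟨h1, hj⟩) h
    rw [this, neg_neg]

/-- if a ∉ B₀ and T(b) ≥ T(a) then Γ·(ab') = -Γ·(ab). -/
theorem stmt_10 (p : ℕ) (hp : 1 ≤ p) (γ : ℕ → ℝ) (a b : QStr p)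
    (ha : ¬ symB p a) (hT : Tof p a ≤ Tof p b) :
    Gdot p γ a (primeQ p b) = - Gdot p γ a b := by
  have hTa : 1 ≤ Tof p a := one_le_Tof p a ha
  have key : Gdot p γ a (primeQ p b) + Gdot p γ a b = 0 := by
    unfold Gdot
    rw [← Finset.sum_add_distrib]
    refine Finset.sum_involution (fun j _ => -j) ?_ ?_ (fun j hj => ?_) (fun j hj => by ring)
    · intro j hj
      have hj' : -j ∈ Finset.Icc (-(p:ℤ)) (p:ℤ) := by
        simp only [Finset.mem_Icc] at hj ⊢; omega
      rw [ent_prime p b j hj, ent_prime p b (-j) hj', abs_neg]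
      by_cases h : 1 ≤ |j| ∧ |j| ≤ Tof p b
      · rw [if_pos h, if_pos h]; ring
      · rw [if_neg h, if_neg h]
        by_cases hj0 : j = 0
        · subst hj0; simp [Gam]
        · have h1 : 1 ≤ |j| := by
            have := abs_pos.mpr hj0; omega
          have habs : |j| ≤ (p:ℤ) := abs_le.mpr (Finset.mem_Icc.1 hj)
          push_neg at h
          have hTb : Tof p b < |j| := h h1
          rw [Gam_neg, ent_neg_eq p a j habs h1 (by omega),
            ent_neg_eq p b j habs h1 hTb]
          ring
    · intro j hj hne
      intro hcontra
      have hjj : -j = j := hcontra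
      have : j = 0 := by omega
      subst this
      simp [Gam] at hne
    · simp only [Finset.mem_Icc] at hj ⊢; omega
  linarith
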